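/- arXiv:2405.05106 — 2 statements merged into one kernel-verified Lean document; each statement's English description precedes it below -/
import Mathlib

section
/- Suppose N is an abelian normal subgroup of a finite group G and M is a subgroup with N ≤ M ≤ G such that |N| and |G:M| are coprime. If N has a complement in M, then N has a complement in G. -/
open scoped Pointwise

/-- A subgroup `M` of `Q` is a minimal normal subgroup. -/
def IsMinimalNormal {Q : Type*} [Group Q] (M : Subgroup Q) : Prop :=
  M.Normal ∧ M ≠ ⊥ ∧ ∀ N : Subgroup Q, N.Normal → N ≤ M → N = ⊥ ∨ N = M

/-- `L/K` is a chief factor of `G`. -/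
def IsChiefFactor {G : Type*} [Group G] (K L : Subgroup G) (hK : K.Normal) : Prop :=
  L.Normal ∧ K ≤ L ∧ (letI := hK; IsMinimalNormal (L.map (QuotientGroup.mk' K)))

/-- `H` satisfies the Π-property in `G`: for every chief factor `L/K` of `G`,
every prime dividing `|G/K : N_{G/K}(HK/K ∩ L/K)|` divides `|HK/K ∩ L/K|`. -/
def PiProperty {G : Type*} [Group G] (H : Subgroup G) : Prop :=
  ∀ (K L : Subgroup G) (hK : K.Normal), IsChiefFactor K L hK →
    (letI := hK;
      ∀ q : ℕ, q.Prime →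
        q ∣ (Subgroup.normalizer
              (((H.map (QuotientGroup.mk' K) ⊓ L.map (QuotientGroup.mk' K) : Subgroup (G ⧸ K)) :
                Set (G ⧸ K)))).index →
        q ∣ Nat.card ↥(H.map (QuotientGroup.mk' K) ⊓ L.map (QuotientGroup.mk' K)))

/-- `G` is `p`-soluble: every chief factor is a `p`-group or a `p'`-group. -/
def PSoluble (p : ℕ) (G : Type*) [Group G] : Prop :=
  ∀ (K L : Subgroup G) (hK : K.Normal), IsChiefFactor K L hK →
    (letI := hK;
      IsPGroup p ↥(L.map (QuotientGroup.mk' K)) ∨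
      ¬ p ∣ Nat.card ↥(L.map (QuotientGroup.mk' K)))

/-- `G` is `p`-supersoluble: `p`-soluble and every chief factor of order divisible
by `p` has order exactly `p`. -/
def PSupersoluble (p : ℕ) (G : Type*) [Group G] : Prop :=
  PSoluble p G ∧
  ∀ (K L : Subgroup G) (hK : K.Normal), IsChiefFactor K L hK →
    (letI := hK;
      p ∣ Nat.card ↥(L.map (QuotientGroup.mk' K)) →
      Nat.card ↥(L.map (QuotientGroup.mk' K)) = p)

/-- `G` is `p`-nilpotent: it has a normal subgroup of order coprime to `p`
whose index is a power of `p`. -/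
def PNilpotent (p : ℕ) (G : Type*) [Group G] : Prop :=
  ∃ N : Subgroup G, N.Normal ∧ Nat.Coprime (Nat.card N) p ∧ ∃ k : ℕ, N.index = p ^ k

/-- The Frattini subgroup: the intersection of all maximal subgroups. -/
def frattiniSubgroup (H : Type*) [Group H] : Subgroup H :=
  sInf {M : Subgroup H | IsCoatom M}

/-- `O^p(G)`: the smallest normal subgroup of `G` with `p`-group quotient. -/
def pResidual (p : ℕ) (G : Type*) [Group G] : Subgroup G :=
  sInf {N : Subgroup G | N.Normal ∧ ∀ g : G, ∃ k : ℕ, g ^ p ^ k ∈ N}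

/-- `T` is subnormal in `G`. -/
def IsSubnormal {G : Type*} [Group G] (T : Subgroup G) : Prop :=
  ∃ (n : ℕ) (c : Fin (n + 1) → Subgroup G), c 0 = T ∧ c (Fin.last n) = ⊤ ∧
    ∀ i : Fin n, c i.castSucc ≤ c i.succ ∧ ((c i.castSucc).subgroupOf (c i.succ)).Normal

/-- Two subgroups permute: `AB = BA` as sets. -/
def Permutes {G : Type*} [Group G] (A B : Subgroup G) : Prop :=
  (A : Set G) * (B : Set G) = (B : Set G) * (A : Set G)

/-- `H` is S-semipermutable in `G`: `H` permutes with every Sylow `q`-subgroup of `G`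
for every prime `q` not dividing `|H|`. -/
def SSemipermutable {G : Type*} [Group G] (H : Subgroup G) : Prop :=
  ∀ q : ℕ, q.Prime → ¬ q ∣ Nat.card H → ∀ Q : Sylow q G, Permutes H Q

theorem stmt3 {G : Type*} [Group G] [Finite G] (N M : Subgroup G) [N.Normal]
    (hNM : N ≤ M) (hab : ∀ x ∈ N, ∀ y ∈ N, x * y = y * x)
    (hcop : Nat.Coprime (Nat.card N) M.index)
    (hcompl : ∃ C : Subgroup G, C ≤ M ∧ N ⊓ C = ⊥ ∧ N ⊔ C = M) :
    ∃ C : Subgroup G, N ⊓ C = ⊥ ∧ N ⊔ C = ⊤ := by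
  obtain ⟨C, hCM, hNC, hNCM⟩ := hcompl
  rcases eq_or_ne (Nat.card ↥N) 1 with h1 | h1
  · refine ⟨⊤, ?_, sup_top_eq N⟩
    rw [Subgroup.card_eq_one.mp h1]
    exact bot_inf_eq ⊤
  letI : CommGroup ↥N :=
    { (inferInstance : Group ↥N) with
      mul_comm := fun a b => Subtype.ext (hab a a.2 b b.2) }
  set mk : G →* G ⧸ N := QuotientGroup.mk' N with hmkdef
  have hker : mk.ker = N := QuotientGroup.ker_mk' N
  set P : Subgroup (G ⧸ N) := M.map mk with hPdef
  -- P is also the image of C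
  have hPC : P = C.map mk := by
    have hN : N.map mk = ⊥ := by
      rw [Subgroup.map_eq_bot_iff, hker]
    rw [hPdef, ← hNCM, Subgroup.map_sup, hN, bot_sup_eq]
  -- section s of mk, landing in C over P
  have hsec : ∀ q : G ⧸ N, ∃ g : G, mk g = q ∧ (q ∈ P → g ∈ C) := by
    intro q
    by_cases hq : q ∈ P
    · rw [hPC] at hq
      obtain ⟨c, hc, hcq⟩ := hq
      exact ⟨c, hcq, fun _ => hc⟩
    · exact ⟨q.out, QuotientGroup.out_eq' q, fun h => absurd h hq⟩
  choose s hs hsC using hsec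
  -- the 2-cocycle
  have hamem : ∀ q r : G ⧸ N, s q * s r * (s (q * r))⁻¹ ∈ N := by
    intro q r
    have h : s q * s r * (s (q * r))⁻¹ ∈ mk.ker := by
      rw [MonoidHom.mem_ker]
      simp [hs]
    rwa [hker] at h
  set αN : (G ⧸ N) → (G ⧸ N) → ↥N := fun q r => ⟨_, hamem q r⟩ with hαdef
  have hα : ∀ q r, (αN q r : G) = s q * s r * (s (q * r))⁻¹ := fun q r => rfl
  -- conjugation
  have hcjmem : ∀ (q : G ⧸ N) (a : ↥N), s q * (a : G) * (s q)⁻¹ ∈ N := fun q a =>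
    Subgroup.Normal.conj_mem ‹N.Normal› _ a.2 _
  set cj : (G ⧸ N) → (↥N →* ↥N) := fun q =>
    { toFun := fun a => ⟨s q * (a : G) * (s q)⁻¹, hcjmem q a⟩
      map_one' := by ext; simp
      map_mul' := by
        intro a b
        ext
        push_cast
        group } with hcjdef
  have hcj : ∀ (q : G ⧸ N) (a : ↥N), (cj q a : G) = s q * (a : G) * (s q)⁻¹ := fun q a => rfl
  -- cocycle identity
  have hC : ∀ q r t : G ⧸ N, αN q r * αN (q * r) t = cj q (αN r t) * αN q (r * t) := by
    intro q r t
    ext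
    simp only [Subgroup.coe_mul, hα, hcj]
    rw [mul_assoc q r t]
    group
  -- vanishing on P
  have hvan : ∀ y z : G ⧸ N, y ∈ P → z ∈ P → αN y z = 1 := by
    intro y z hy hz
    have h3 : s (y * z) ∈ C := hsC _ (mul_mem hy hz)
    have hmem : (αN y z : G) ∈ N ⊓ C := by
      refine ⟨(αN y z).2, ?_⟩
      rw [hα]
      exact mul_mem (mul_mem (hsC y hy) (hsC z hz)) (C.inv_mem h3)
    rw [hNC] at hmem
    exact Subtype.ext hmem
  -- the coset bookkeeping
  set p : (G ⧸ N) → ((G ⧸ N) ⧸ P) → (G ⧸ N) := fun x c => ((x • c).out)⁻¹ * x * c.out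
    with hpdef
  have hp2 : ∀ x c, (x • c).out * p x c = x * c.out := by
    intro x c
    rw [hpdef]
    simp [mul_assoc]
  have hpP : ∀ x c, p x c ∈ P := by
    intro x c
    have h2 : ((x • c).out : (G ⧸ N) ⧸ P) = ↑(x * c.out) := by
      rw [QuotientGroup.out_eq']
      have h4 : ((x * c.out : G ⧸ N) : (G ⧸ N) ⧸ P) = x • (c.out : (G ⧸ N) ⧸ P) := by
        rw [← smul_eq_mul, MulAction.Quotient.smul_coe]
      rw [h4, QuotientGroup.out_eq']
    have h3 := QuotientGroup.eq.mp h2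
    show ((x • c).out)⁻¹ * x * c.out ∈ P
    rwa [mul_assoc]
  have hp3 : ∀ q r c, p q (r • c) * p r c = p (q * r) c := by
    intro q r c
    rw [hpdef]
    simp only [smul_smul]
    group
  -- finiteness
  letI : Fintype ((G ⧸ N) ⧸ P) := Fintype.ofFinite _
  have hcard : Fintype.card ((G ⧸ N) ⧸ P) = M.index := by
    rw [← Nat.card_eq_fintype_card]
    exact Subgroup.index_map_eq M (QuotientGroup.mk'_surjective N) (hker.le.trans hNM)
  -- per-coset identity
  have key : ∀ (q r : G ⧸ N) (c : (G ⧸ N) ⧸ P),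
      αN q r * αN (q * r) c.out =
        cj q (αN r c.out) * ((cj q (αN (r • c).out (p r c)))⁻¹ * (αN q (r • c).out *
          ((αN ((q * r) • c).out (p q (r • c)))⁻¹ * αN ((q * r) • c).out (p (q * r) c)))) := by
    intro q r c
    have e1 : αN q r * αN (q * r) c.out = cj q (αN r c.out) * αN q (r * c.out) := hC q r c.out
    have e2 : αN q (r * c.out) =
        (cj q (αN (r • c).out (p r c)))⁻¹ *
          (αN q (r • c).out * αN (q * (r • c).out) (p r c)) := by
      rw [← hp2 r c, eq_inv_mul_iff_mul_eq]
      exact (hC q (r • c).out (p r c)).symm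
    have e4 : q * (r • c).out = ((q * r) • c).out * p q (r • c) := by
      rw [← hp2 q (r • c), smul_smul]
    have e5 : αN (((q * r) • c).out * p q (r • c)) (p r c) =
        (αN ((q * r) • c).out (p q (r • c)))⁻¹ * αN ((q * r) • c).out (p (q * r) c) := by
      have h := hC ((q * r) • c).out (p q (r • c)) (p r c)
      rw [hvan _ _ (hpP q (r • c)) (hpP r c), map_one, one_mul, hp3 q r c] at h
      rw [eq_inv_mul_iff_mul_eq]
      exact h
    rw [e1, e2, e4, e5]
  -- the master identity: a function β with dβ = α ^ n
  have hβex : ∃ b : (G ⧸ N) → ↥N, ∀ q r,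
      (αN q r) ^ M.index = cj q (b r) * b q * (b (q * r))⁻¹ := by
    refine ⟨fun x : G ⧸ N => (∏ c : (G ⧸ N) ⧸ P, αN x c.out) *
      (∏ c : (G ⧸ N) ⧸ P, αN (x • c).out (p x c))⁻¹, ?_⟩
    intro q r
    have hprod := Finset.prod_congr rfl (fun c (_ : c ∈ Finset.univ) => key q r c)
    simp only [Finset.prod_mul_distrib, Finset.prod_inv_distrib] at hprod
    rw [Finset.prod_const, Finset.card_univ, hcard, ← map_prod, ← map_prod] at hprod
    have hr1 : (∏ c : (G ⧸ N) ⧸ P, αN q (r • c).out) = ∏ c : (G ⧸ N) ⧸ P, αN q c.out :=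
      Equiv.prod_comp (MulAction.toPerm r : Equiv.Perm ((G ⧸ N) ⧸ P)) (fun c : (G ⧸ N) ⧸ P => αN q c.out)
    have hr2 : (∏ c : (G ⧸ N) ⧸ P, αN ((q * r) • c).out (p q (r • c))) =
        ∏ c : (G ⧸ N) ⧸ P, αN (q • c).out (p q c) := by
      have h5 : ∀ c : (G ⧸ N) ⧸ P, αN ((q * r) • c).out (p q (r • c)) =
          αN ((q • (r • c)).out) (p q (r • c)) := by
        intro c; rw [smul_smul]
      rw [Finset.prod_congr rfl (fun c _ => h5 c)]
      exact Equiv.prod_comp (MulAction.toPerm r : Equiv.Perm ((G ⧸ N) ⧸ P)) (fun c : (G ⧸ N) ⧸ P => αN (q • c).out (p q c))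
    rw [hr1, hr2] at hprod
    beta_reduce
    rw [map_mul, map_inv, mul_inv_rev, inv_inv]
    rw [eq_mul_inv_of_mul_eq hprod]
    simp only [mul_assoc]
  obtain ⟨β, hβkey⟩ := hβex
  -- invert the index modulo the order of N
  have hpos : 0 < Nat.card ↥N := Nat.card_pos
  have hlt : 1 < Nat.card ↥N := by omega
  obtain ⟨m, -, hm⟩ := Nat.exists_mul_mod_eq_one_of_coprime hcop.symm hlt
  have hpow : ∀ a : ↥N, a ^ (M.index * m) = a := by
    intro a
    have hd : orderOf a ∣ Nat.card ↥N := orderOf_dvd_natCard a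
    have hmod : M.index * m ≡ 1 [MOD Nat.card ↥N] := by
      show M.index * m % Nat.card ↥N = 1 % Nat.card ↥N
      rw [hm, Nat.mod_eq_of_lt hlt]
    calc a ^ (M.index * m) = a ^ 1 := pow_eq_pow_iff_modEq.mpr (Nat.ModEq.of_dvd hd hmod)
      _ = a := pow_one a
  have hγ : ∀ q r, αN q r = cj q ((β r) ^ m) * (β q) ^ m * ((β (q * r)) ^ m)⁻¹ := by
    intro q r
    rw [map_pow, ← inv_pow, ← mul_pow, ← mul_pow, ← hβkey, ← pow_mul]
    exact (hpow _).symm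
  -- the splitting homomorphism
  set σ : (G ⧸ N) → G := fun x => ((β x ^ m : ↥N) : G)⁻¹ * s x with hσdef
  have hσapp : ∀ x, σ x = ((β x ^ m : ↥N) : G)⁻¹ * s x := fun _ => rfl
  have hσmul : ∀ x y, σ (x * y) = σ x * σ y := by
    intro x y
    rw [hσapp, hσapp, hσapp]
    have h8 : s x * s y = (αN x y : G) * s (x * y) := by rw [hα]; group
    have hγ' : (αN x y : G) = (cj x (β y ^ m) : G) * ((β x ^ m : ↥N) : G) *
        (((β (x * y) ^ m : ↥N) : G))⁻¹ := by
      have h9 := congrArg (Subtype.val) (hγ x y)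
      simpa using h9
    calc ((β (x * y) ^ m : ↥N) : G)⁻¹ * s (x * y)
        = ((β x ^ m : ↥N) : G)⁻¹ * ((cj x (β y ^ m) : G))⁻¹ * ((αN x y : G) * s (x * y)) := by
          rw [hγ']; group
      _ = ((β x ^ m : ↥N) : G)⁻¹ * ((cj x (β y ^ m) : G))⁻¹ * (s x * s y) := by rw [h8]
      _ = ((β x ^ m : ↥N) : G)⁻¹ * s x * (((β y ^ m : ↥N) : G)⁻¹ * s y) := by
          rw [hcj]; group
  let f : (G ⧸ N) →* G := MonoidHom.mk' σ hσmul
  have hf : ∀ x, f x = σ x := fun _ => rfl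
  have hmkσ : ∀ x, mk (σ x) = x := by
    intro x
    rw [hσapp, map_mul, map_inv, hs]
    have h10 : mk ((β x ^ m : ↥N) : G) = 1 := (QuotientGroup.eq_one_iff _).mpr (β x ^ m).2
    rw [h10]
    group
  refine ⟨f.range, ?_, ?_⟩
  · rw [eq_bot_iff]
    rintro g ⟨hgN, x, rfl⟩
    have h10 : mk (f x) = 1 := (QuotientGroup.eq_one_iff _).mpr hgN
    have hx : x = 1 := by rw [hf, hmkσ] at h10; exact h10
    simp [hx]
  · rw [eq_top_iff]
    intro g _
    have hgn : g * (f (mk g))⁻¹ ∈ N := by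
      have h11 : mk (g * (f (mk g))⁻¹) = 1 := by
        rw [map_mul, map_inv, hf, hmkσ]
        group
      exact (QuotientGroup.eq_one_iff _).mp h11
    have h12 : g = (g * (f (mk g))⁻¹) * f (mk g) := by group
    rw [h12]
    exact Subgroup.mul_mem_sup hgn ⟨mk g, rfl⟩
end

section
/- Let G be a finite p-supersoluble group and H a p-subgroup of G, where p is a prime dividing |G|. Then H satisfies the Π-property in G. -/
open scoped Pointwise

theorem stmt5 {G : Type*} [Group G] [Finite G] (p : ℕ) (hp : p.Prime)
    (hdvd : p ∣ Nat.card G) (hG : PSupersoluble p G) (H : Subgroup G)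
    (hH : IsPGroup p H) : PiProperty H := by
  intro K L hK hCF q hq hqdvd
  letI := hK
  set Hb := H.map (QuotientGroup.mk' K) with hHb
  set Lb := L.map (QuotientGroup.mk' K) with hLb
  by_cases hX : Hb ⊓ Lb = ⊥
  · rw [hX] at hqdvd
    have : (Subgroup.normalizer ((⊥ : Subgroup (G ⧸ K)) : Set (G ⧸ K))) = ⊤ :=
      Subgroup.normalizer_eq_top_iff.mpr inferInstance
    rw [this, Subgroup.index_top] at hqdvd
    exact absurd (Nat.eq_one_of_dvd_one hqdvd) hq.ne_one
  · -- X nontrivial p-group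
    have hXp : IsPGroup p ↥(Hb ⊓ Lb) := (hH.map _).to_le inf_le_left
    have hcard1 : Nat.card ↥(Hb ⊓ Lb) ≠ 1 := fun h => hX (Subgroup.card_eq_one.mp h)
    have hpdvdX : p ∣ Nat.card ↥(Hb ⊓ Lb) := by
      haveI : Fact p.Prime := ⟨hp⟩
      obtain ⟨k, hk⟩ := IsPGroup.iff_card.mp hXp
      rcases Nat.eq_zero_or_pos k with h0 | h0
      · simp [h0] at hk; exact absurd hk hcard1
      · rw [hk]; exact dvd_pow_self p h0.ne'
    rcases hG.1 K L hK hCF with hLp | hLp'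
    · -- Lb is a p-group
      have hLne : Lb ≠ ⊥ := hCF.2.2.2.1
      have hLcard1 : Nat.card ↥Lb ≠ 1 := fun h => hLne (Subgroup.card_eq_one.mp h)
      have hpdvdL : p ∣ Nat.card ↥Lb := by
        haveI : Fact p.Prime := ⟨hp⟩
        obtain ⟨k, hk⟩ := IsPGroup.iff_card.mp hLp
        rcases Nat.eq_zero_or_pos k with h0 | h0
        · simp [h0] at hk; exact absurd hk hLcard1
        · rw [hk]; exact dvd_pow_self p h0.ne'
      have hLp2 : Nat.card ↥Lb = p := hG.2 K L hK hCF hpdvdL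
      have hXL : Hb ⊓ Lb ≤ Lb := inf_le_right
      have hXcard : Nat.card ↥(Hb ⊓ Lb) = p := by
        have hd : Nat.card ↥(Hb ⊓ Lb) ∣ p := hLp2 ▸ Subgroup.card_dvd_of_le hXL
        rcases (Nat.Prime.eq_one_or_self_of_dvd hp _ hd) with h | h
        · exact absurd h hcard1
        · exact h
      have hXeq : Hb ⊓ Lb = Lb :=
        Subgroup.eq_of_le_of_card_ge hXL (by rw [hXcard, hLp2])
      have hnorm : Subgroup.normalizer ((Hb ⊓ Lb : Subgroup (G ⧸ K)) : Set (G ⧸ K)) = ⊤ := by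
        rw [hXeq]; exact Subgroup.normalizer_eq_top_iff.mpr hCF.2.2.1
      rw [hnorm, Subgroup.index_top] at hqdvd
      exact absurd (Nat.eq_one_of_dvd_one hqdvd) hq.ne_one
    · exact absurd (hpdvdX.trans (Subgroup.card_dvd_of_le inf_le_right)) hLp'
end
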